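/- Let R be a commutative ring in which 2 is invertible, let E = E_{1,3} ∈ Mat₃(R), let h(R) be the centralizer of E in gl₃(R) (upper-triangular matrices [[a,x,z],[0,b,y],[0,0,a]]), let h(R)ᵀ be the set of transposes of elements of h(R), and let h(R)^⊥ = { B ∈ gl₃(R) : tr(AB) = 0 for all A ∈ h(R) }. Then gl₃(R) = h(R)ᵀ ⊕ h(R)^⊥ as R-modules, and h(R)^⊥ = [E, gl₃(R)]. -/

import Mathlib

/-!
Under the trace pairing, `h(R)` sees exactly the five linear forms `B 0 0 + B 2 2`, `B 1 1`,
`B 1 0`, `B 2 1`, `B 2 0`, so `h(R)^⊥` is the set where they vanish; the commutator `[E, Y]`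
has exactly these entries zero and its remaining four entries are arbitrary entries of `Y`.
A matrix in `h(R)ᵀ` is lower triangular with equal corner entries, so `X` splits uniquely by
giving its strictly lower part and middle entry to `h(R)ᵀ` and dividing `X 0 0 + X 2 2`
evenly between the two corners, which is where `2` must be invertible.
-/

open Matrix

section

variable {R : Type*} [CommRing R]

/-- `h(R)^⊥`, given by the entries it must kill (see `trace_orthogonal_upper_eq_hPerp`). -/
def hPerp (R : Type*) [CommRing R] : Set (Matrix (Fin 3) (Fin 3) R) :=
  {B | B 0 0 + B 2 2 = 0 ∧ B 1 1 = 0 ∧ B 1 0 = 0 ∧ B 2 1 = 0 ∧ B 2 0 = 0}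

theorem trace_upper_mul (a b x y z : R) (B : Matrix (Fin 3) (Fin 3) R) :
    (!![a, x, z; 0, b, y; 0, 0, a] * B).trace =
      a * (B 0 0 + B 2 2) + b * B 1 1 + x * B 1 0 + y * B 2 1 + z * B 2 0 := by
  simp only [trace_fin_three, mul_apply, Fin.sum_univ_three, of_apply, cons_val', cons_val_zero,
    cons_val_one, cons_val, cons_val_fin_one, zero_mul, zero_add, add_zero]
  ring

theorem trace_orthogonal_upper_eq_hPerp :
    {B : Matrix (Fin 3) (Fin 3) R |
      ∀ A ∈ {X | ∃ a b x y z : R, X = !![a, x, z; 0, b, y; 0, 0, a]}, (A * B).trace = 0} =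
      hPerp R := by
  ext B
  constructor
  · intro hB
    have hB' (a b x y z : R) :
        a * (B 0 0 + B 2 2) + b * B 1 1 + x * B 1 0 + y * B 2 1 + z * B 2 0 = 0 := by
      rw [← trace_upper_mul]
      exact hB _ ⟨a, b, x, y, z, rfl⟩
    refine ⟨?_, ?_, ?_, ?_, ?_⟩
    · simpa using hB' 1 0 0 0 0
    · simpa using hB' 0 1 0 0 0
    · simpa using hB' 0 0 1 0 0
    · simpa using hB' 0 0 0 1 0
    · simpa using hB' 0 0 0 0 1
  · rintro ⟨h₁, h₂, h₃, h₄, h₅⟩ _ ⟨a, b, x, y, z, rfl⟩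
    rw [trace_upper_mul, h₁, h₂, h₃, h₄, h₅]
    ring

theorem single_commutator_eq (Y : Matrix (Fin 3) (Fin 3) R) :
    single 0 2 1 * Y - Y * single 0 2 1 =
      !![Y 2 0, Y 2 1, Y 2 2 - Y 0 0; 0, 0, -Y 1 0; 0, 0, -Y 2 0] := by
  ext i j
  fin_cases i <;> fin_cases j <;> simp [mul_apply, single_apply]

theorem range_single_commutator_eq_hPerp :
    {X : Matrix (Fin 3) (Fin 3) R | ∃ Y, X = single 0 2 1 * Y - Y * single 0 2 1} = hPerp R := by
  ext B
  simp only [Set.mem_ofPred_eq, hPerp, single_commutator_eq]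
  constructor
  · rintro ⟨Y, rfl⟩
    simp
  · rintro ⟨h₁, h₂, h₃, h₄, h₅⟩
    refine ⟨!![0, 0, 0; -B 1 2, 0, 0; B 0 0, B 0 1, B 0 2], ?_⟩
    ext i j
    fin_cases i <;> fin_cases j <;> simp [h₂, h₃, h₄, h₅, eq_neg_of_add_eq_zero_right h₁]

theorem transpose_upper (a b x y z : R) :
    !![a, x, z; 0, b, y; 0, 0, a]ᵀ = !![a, 0, 0; x, b, 0; z, y, a] := by
  ext i j
  fin_cases i <;> fin_cases j <;> rfl

theorem transpose_upper_set :
    {X : Matrix (Fin 3) (Fin 3) R |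
      ∃ Y ∈ {X | ∃ a b x y z : R, X = !![a, x, z; 0, b, y; 0, 0, a]}, X = Yᵀ} =
      {X | ∃ a b x y z : R, X = !![a, 0, 0; x, b, 0; z, y, a]} := by
  ext X
  simp [transpose_upper]

/-- The `h(R)ᵀ`-component of `X` in the decomposition `gl₃(R) = h(R)ᵀ ⊕ h(R)^⊥`. -/
def lowerProj [Invertible (2 : R)] (X : Matrix (Fin 3) (Fin 3) R) : Matrix (Fin 3) (Fin 3) R :=
  !![⅟2 * (X 0 0 + X 2 2), 0, 0; X 1 0, X 1 1, 0; X 2 0, X 2 1, ⅟2 * (X 0 0 + X 2 2)]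

theorem sub_lowerProj_mem_hPerp [Invertible (2 : R)] (X : Matrix (Fin 3) (Fin 3) R) :
    X - lowerProj X ∈ hPerp R := by
  refine ⟨?_, ?_, ?_, ?_, ?_⟩ <;>
    simp only [lowerProj, Matrix.sub_apply, of_apply, cons_val', cons_val_zero, cons_val_one, cons_val,
      cons_val_fin_one, sub_self]
  linear_combination -(X 0 0 + X 2 2) * invOf_mul_self (2 : R)

theorem lowerProj_add_of_mem_hPerp [Invertible (2 : R)] (a b x y z : R)
    {Q : Matrix (Fin 3) (Fin 3) R} (hQ : Q ∈ hPerp R) :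
    lowerProj (!![a, 0, 0; x, b, 0; z, y, a] + Q) = !![a, 0, 0; x, b, 0; z, y, a] := by
  obtain ⟨h₁, h₂, h₃, h₄, h₅⟩ := hQ
  have hdiag : ⅟2 * (a + Q 0 0 + (a + Q 2 2)) = a := by
    linear_combination ⅟2 * h₁ + a * invOf_mul_self (2 : R)
  ext i j
  fin_cases i <;> fin_cases j <;> simp [lowerProj, h₂, h₃, h₄, h₅, hdiag]

theorem existsUnique_lower_add_hPerp [Invertible (2 : R)] (X : Matrix (Fin 3) (Fin 3) R) :
    ∃! p : Matrix (Fin 3) (Fin 3) R × Matrix (Fin 3) (Fin 3) R,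
      p.1 ∈ {X | ∃ a b x y z : R, X = !![a, 0, 0; x, b, 0; z, y, a]} ∧ p.2 ∈ hPerp R ∧
        X = p.1 + p.2 := by
  refine ⟨(lowerProj X, X - lowerProj X),
    ⟨⟨_, _, _, _, _, rfl⟩, sub_lowerProj_mem_hPerp X, (add_sub_cancel _ _).symm⟩, ?_⟩
  rintro ⟨_, Q⟩ ⟨⟨a, b, x, y, z, rfl⟩, hQ, rfl⟩
  have hP := lowerProj_add_of_mem_hPerp a b x y z hQ
  ext : 1
  · exact hP.symm
  · simp [hP]

end

theorem gl3_decomposition_hT_hperp (R : Type*) [CommRing R] (h2 : IsUnit (2 : R))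
    (E : Matrix (Fin 3) (Fin 3) R) (hE : E = Matrix.single 0 2 1)
    (h hT hperp : Set (Matrix (Fin 3) (Fin 3) R))
    (hh : h = {X | ∃ a b x y z : R, X = !![a, x, z; 0, b, y; 0, 0, a]})
    (hhT : hT = {X | ∃ Y ∈ h, X = Y.transpose})
    (hhperp : hperp = {B | ∀ A ∈ h, (A * B).trace = 0}) :
    (∀ X : Matrix (Fin 3) (Fin 3) R,
      ∃! p : Matrix (Fin 3) (Fin 3) R × Matrix (Fin 3) (Fin 3) R,
        p.1 ∈ hT ∧ p.2 ∈ hperp ∧ X = p.1 + p.2) ∧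
    hperp = {X | ∃ Y, X = E * Y - Y * E} := by
  let := h2.invertible
  subst hE hh hhT hhperp
  rw [transpose_upper_set, trace_orthogonal_upper_eq_hPerp, range_single_commutator_eq_hPerp]
  exact ⟨existsUnique_lower_add_hPerp, rfl⟩
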